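/- Let A, B be strings of lengths m and n, σ a character, K' the all scores matrix of σA and B, and Diff = K' − K. Assume every row of K□ contains at most one nonzero entry and every nonzero entry of K□ equals 1. Then for all 0 ≤ i < j ≤ n, the pair (i,j) is a step index of Diff (i.e., Diff[i,j] ≠ Diff[i,j−1]) if and only if k = nextmatch(i,σ,B) < ∞, every row i' with i+1 ≤ i' ≤ k of K□ contains a pivotal point, and j = max{ j' : there exists i' with i+1 ≤ i' ≤ k and K□[i',j'] ≠ 0 } (the maximum column index among all pivotal points of K□ in rows i+1,…,k). -/

import Mathlib

/-!
Let `k = nextmatch(i, σ, B)`. A common subsequence of `B[i..j]` and `σA` either ignores the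
leading `σ`, or can be taken to match it with `B[k]`; hence `K'[i, j] = K[i, j]` for `j < k` and
`K'[i, j] = max (K[i, j], 1 + K[k, j])` for `k ≤ j`. Summing `K□` over the rectangle
`(i, k] × (i, j]`, where every row carries at most one pivotal point and it has value `1`, shows
that `K[i, j] - K[k, j]` is the number of rows of `(i, k]` with no pivotal point in the columns
`(i, j]`. So `Diff[i, j]` is `1` exactly when all rows `i + 1, …, k` have their pivotal points in
columns `≤ j` (they are always in columns `> i`, since `K□` vanishes below the diagonal), and the
unique step of `Diff` in row `i` is at the largest of these pivotal columns.
-/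

variable {α : Type*}

/-- LCS of two lists: the maximum length of a common sublist. -/
noncomputable def LCS (X Y : List α) : ℕ :=
  sSup {k | ∃ Z : List α, Z.length = k ∧ Z.Sublist X ∧ Z.Sublist Y}

/-- `substr S i j` is S[i..j]: the characters of S at (1-based) positions i+1,…,j. -/
def substr (S : List α) (i j : ℕ) : List α := (S.take j).drop i

/-- The density matrix D□ of a matrix D. -/
def density (D : ℕ → ℕ → ℤ) (i j : ℕ) : ℤ :=
  D i j + D (i - 1) (j - 1) - D (i - 1) j - D i (j - 1)

/-- The all scores matrix K of A and B: K[i,j] = LCS(B[i..j], A) if i ≤ j, else j - i. -/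
noncomputable def Kmat (A B : List α) (i j : ℕ) : ℤ :=
  if i ≤ j then (LCS (substr B i j) A : ℤ) else (j : ℤ) - (i : ℤ)

/-- The all scores matrix P of A and B: P[i,j] = LCS(B[i..n], A[0..j]). -/
noncomputable def Pmat (A B : List α) (i j : ℕ) : ℤ :=
  (LCS (substr B i B.length) (substr A 0 j) : ℤ)

/-- nextmatch(i,σ,B): minimum (1-based) position i' with i < i' ≤ |B| and B[i'] = σ; ⊤ (∞) if none. -/
noncomputable def nextmatch (i : ℕ) (σ : α) (B : List α) : ℕ∞ :=
  sInf {k : ℕ∞ | ∃ k' : ℕ, k = (k' : ℕ∞) ∧ i < k' ∧ k' ≤ B.length ∧ B[k' - 1]? = some σ}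

/-- prevmatch(j,σ,B): maximum (1-based) position i' with 1 ≤ i' ≤ j and B[i'] = σ; ⊥ (−∞) if none. -/
noncomputable def prevmatch (j : ℕ) (σ : α) (B : List α) : WithBot ℕ :=
  sSup {k : WithBot ℕ | ∃ k' : ℕ, k = (k' : WithBot ℕ) ∧ 1 ≤ k' ∧ k' ≤ j ∧ B[k' - 1]? = some σ}

open Finset

theorem bddAbove_lengths_commonSublist (X Y : List α) :
    BddAbove {k | ∃ Z : List α, Z.length = k ∧ Z.Sublist X ∧ Z.Sublist Y} :=
  ⟨X.length, by rintro _ ⟨Z, rfl, hX, -⟩; exact hX.length_le⟩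

theorem le_lcs {X Y Z : List α} (hX : Z.Sublist X) (hY : Z.Sublist Y) : Z.length ≤ LCS X Y :=
  le_csSup (bddAbove_lengths_commonSublist X Y) ⟨Z, rfl, hX, hY⟩

theorem exists_sublist_length_eq_lcs (X Y : List α) :
    ∃ Z : List α, Z.length = LCS X Y ∧ Z.Sublist X ∧ Z.Sublist Y :=
  Nat.sSup_mem (s := {k | ∃ Z : List α, Z.length = k ∧ Z.Sublist X ∧ Z.Sublist Y})
    ⟨0, [], rfl, List.nil_sublist _, List.nil_sublist _⟩ (bddAbove_lengths_commonSublist X Y)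

theorem lcs_le {X Y : List α} {k : ℕ}
    (h : ∀ Z : List α, Z.Sublist X → Z.Sublist Y → Z.length ≤ k) : LCS X Y ≤ k := by
  obtain ⟨Z, hl, hX, hY⟩ := exists_sublist_length_eq_lcs X Y
  exact hl ▸ h Z hX hY

theorem lcs_cons_right_of_notMem {X A : List α} {σ : α} (h : σ ∉ X) :
    LCS X (σ :: A) = LCS X A := by
  refine le_antisymm (lcs_le fun Z hX hY => ?_)
    (lcs_le fun Z hX hY => le_lcs hX (hY.trans (List.sublist_cons_self _ _)))
  rcases List.sublist_cons_iff.1 hY with hY | ⟨r, rfl, -⟩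
  · exact le_lcs hX hY
  · exact absurd (hX.mem List.mem_cons_self) h

theorem List.Sublist.of_cons_of_append_cons {σ : α} {Z U V : List α} (hU : σ ∉ U)
    (h : (σ :: Z).Sublist (U ++ σ :: V)) : Z.Sublist V := by
  obtain ⟨_ | ⟨a, l₁⟩, l₂, hZ, h₁, h₂⟩ := List.sublist_append_iff.1 h
  · rw [List.nil_append] at hZ
    exact List.cons_sublist_cons.1 (hZ ▸ h₂)
  · simp only [List.cons_append, List.cons.injEq] at hZ
    exact absurd (hZ.1 ▸ h₁.mem List.mem_cons_self) hU

theorem lcs_append_cons_cons {A U V : List α} {σ : α} (hU : σ ∉ U) :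
    LCS (U ++ σ :: V) (σ :: A) = max (LCS (U ++ σ :: V) A) (LCS V A + 1) := by
  apply le_antisymm
  · refine lcs_le fun Z hX hY => ?_
    rcases List.sublist_cons_iff.1 hY with hY | ⟨Z, rfl, hA⟩
    · exact le_max_of_le_left (le_lcs hX hY)
    · exact le_max_of_le_right (Nat.succ_le_succ (le_lcs (hX.of_cons_of_append_cons hU) hA))
  · refine max_le (lcs_le fun Z hX hY => le_lcs hX (hY.trans (List.sublist_cons_self _ _))) ?_
    obtain ⟨Z, hl, hV, hA⟩ := exists_sublist_length_eq_lcs V A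
    rw [← hl]
    exact le_lcs ((hV.cons_cons σ).trans (List.sublist_append_right U _)) (hA.cons_cons σ)

theorem substr_eq_nil (S : List α) {i j : ℕ} (h : j ≤ i) : substr S i j = [] :=
  List.drop_eq_nil_of_le (by simp only [List.length_take]; omega)

theorem substr_append_substr (S : List α) {i k j : ℕ} (hik : i ≤ k) (hkj : k ≤ j) :
    substr S i k ++ substr S k j = substr S i j := by
  simp only [substr, List.drop_take]
  rw [show j - i = (k - i) + (j - k) by omega, List.take_add, List.drop_drop,
    Nat.add_sub_cancel' hik]

theorem substr_pred_self {S : List α} {σ : α} {k : ℕ} (hk : 1 ≤ k) (h : S[k - 1]? = some σ) :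
    substr S (k - 1) k = [σ] := by
  obtain ⟨hlt, rfl⟩ := List.getElem?_eq_some_iff.1 h
  rw [substr, List.drop_take, List.drop_eq_getElem_cons hlt, Nat.sub_sub_self hk]
  rfl

theorem notMem_substr {S : List α} {σ : α} {i j : ℕ}
    (h : ∀ p, i < p → p ≤ j → S[p - 1]? ≠ some σ) : σ ∉ substr S i j := by
  intro hm
  obtain ⟨t, ht, hget⟩ := List.mem_iff_getElem.1 hm
  simp only [substr, List.length_drop, List.length_take] at ht
  simp only [substr, List.getElem_drop, List.getElem_take] at hget
  refine h (i + t + 1) (by omega) (by omega) ?_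
  rw [Nat.add_sub_cancel, List.getElem?_eq_getElem (by omega), hget]

theorem lcs_nil_left (Y : List α) : LCS [] Y = 0 :=
  Nat.le_zero.1 <| lcs_le fun Z hX _ => by rw [List.sublist_nil.1 hX]; rfl

theorem kmat_of_le (A B : List α) {i j : ℕ} (h : j ≤ i) : Kmat A B i j = (j : ℤ) - i := by
  rw [Kmat]
  split_ifs with hij
  · rw [le_antisymm h hij, substr_eq_nil B le_rfl, lcs_nil_left, sub_self, Nat.cast_zero]
  · rfl

theorem kmat_cons_of_forall_ne {A B : List α} {σ : α} {i j : ℕ}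
    (h : ∀ p, i < p → p ≤ j → B[p - 1]? ≠ some σ) :
    Kmat (σ :: A) B i j = Kmat A B i j := by
  simp only [Kmat, lcs_cons_right_of_notMem (notMem_substr h)]

theorem kmat_cons_eq_max {A B : List α} {σ : α} {i k j : ℕ} (hik : i < k) (hkj : k ≤ j)
    (hmatch : B[k - 1]? = some σ) (hmin : ∀ p, i < p → p < k → B[p - 1]? ≠ some σ) :
    Kmat (σ :: A) B i j = max (Kmat A B i j) (Kmat A B k j + 1) := by
  have hsplit : substr B i j = substr B i (k - 1) ++ σ :: substr B k j := by
    rw [← substr_append_substr B (show i ≤ k - 1 by omega) (show k - 1 ≤ j by omega),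
      ← substr_append_substr B (Nat.sub_le k 1) hkj, substr_pred_self (by omega) hmatch]
    rfl
  simp only [Kmat, if_pos (hik.le.trans hkj), if_pos hkj]
  rw [hsplit, lcs_append_cons_cons (notMem_substr fun p h₁ h₂ => hmin p h₁ (by omega))]
  push_cast
  rfl

theorem le_of_density_kmat_ne_zero {A B : List α} {i j : ℕ}
    (h : density (Kmat A B) i j ≠ 0) : i ≤ j := by
  by_contra! hji
  apply h
  rw [density, kmat_of_le A B hji.le, kmat_of_le A B (show j - 1 ≤ i - 1 by omega),
    kmat_of_le A B (show j ≤ i - 1 by omega), kmat_of_le A B (show j - 1 ≤ i by omega)]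
  omega

theorem sum_Ioc_sub_pred {G : Type*} [AddCommGroup G] (f : ℕ → G) {a b : ℕ} (h : a ≤ b) :
    ∑ x ∈ Ioc a b, (f x - f (x - 1)) = f b - f a := by
  induction b, h using Nat.le_induction with
  | base => simp
  | succ b hb ih =>
    rw [sum_Ioc_succ_top hb, ih, Nat.add_sub_cancel]
    abel

theorem sum_Ioc_sum_Ioc_density (D : ℕ → ℕ → ℤ) {a b c d : ℕ} (hab : a ≤ b) (hcd : c ≤ d) :
    ∑ x ∈ Ioc a b, ∑ y ∈ Ioc c d, density D x y = D b d - D a d - D b c + D a c := by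
  have hrow : ∀ x, ∑ y ∈ Ioc c d, density D x y
      = (D x d - D x c) - (D (x - 1) d - D (x - 1) c) := fun x => by
    calc ∑ y ∈ Ioc c d, density D x y
        = ∑ y ∈ Ioc c d, ((D x y - D (x - 1) y) - (D x (y - 1) - D (x - 1) (y - 1))) :=
          sum_congr rfl fun y _ => by rw [density]; ring
      _ = _ := by rw [sum_Ioc_sub_pred (fun y => D x y - D (x - 1) y) hcd]; ring
  rw [sum_congr rfl fun x _ => hrow x, sum_Ioc_sub_pred (fun x => D x d - D x c) hab]
  ring

theorem sum_eq_ite_exists_ne_zero {ι M : Type*} [AddCommMonoidWithOne M] {s : Finset ι}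
    {f : ι → M} [Decidable (∃ a ∈ s, f a ≠ 0)]
    (huniq : ∀ a ∈ s, ∀ b ∈ s, f a ≠ 0 → f b ≠ 0 → a = b)
    (hone : ∀ a ∈ s, f a ≠ 0 → f a = 1) :
    ∑ a ∈ s, f a = if ∃ a ∈ s, f a ≠ 0 then 1 else 0 := by
  split_ifs with h
  · obtain ⟨a, ha, hfa⟩ := h
    rw [sum_eq_single_of_mem a ha fun b hb hba =>
      not_not.1 fun hfb => hba (huniq b hb a ha hfb hfa), hone a ha hfa]
  · push Not at h
    exact sum_eq_zero h

def RowsCovered (D : ℕ → ℕ → ℤ) (i k j : ℕ) : Prop :=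
  ∀ i' ∈ Ioc i k, ∃ j' ∈ Ioc i j, density D i' j' ≠ 0

instance (D : ℕ → ℕ → ℤ) (i k j : ℕ) : Decidable (RowsCovered D i k j) :=
  inferInstanceAs (Decidable (∀ i' ∈ Ioc i k, ∃ j' ∈ Ioc i j, density D i' j' ≠ 0))

theorem RowsCovered.mono {D : ℕ → ℕ → ℤ} {i k j j₂ : ℕ} (h : RowsCovered D i k j)
    (hj : j ≤ j₂) : RowsCovered D i k j₂ := fun i' hi' => by
  obtain ⟨j', hj', hpiv⟩ := h i' hi'
  exact ⟨j', Ioc_subset_Ioc_right hj hj', hpiv⟩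

theorem kmat_sub_kmat_eq_card {A B : List α} {n : ℕ}
    (hRow : ∀ i, 1 ≤ i → i ≤ n → ∀ j₁ j₂, 1 ≤ j₁ → j₁ ≤ n → 1 ≤ j₂ → j₂ ≤ n →
      density (Kmat A B) i j₁ ≠ 0 → density (Kmat A B) i j₂ ≠ 0 → j₁ = j₂)
    (hVal : ∀ i, 1 ≤ i → i ≤ n → ∀ j, 1 ≤ j → j ≤ n →
      density (Kmat A B) i j ≠ 0 → density (Kmat A B) i j = 1)
    {i k j : ℕ} (hik : i ≤ k) (hkn : k ≤ n) (hij : i ≤ j) (hjn : j ≤ n) :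
    Kmat A B i j - Kmat A B k j =
      #{i' ∈ Ioc i k | ¬ ∃ j' ∈ Ioc i j, density (Kmat A B) i' j' ≠ 0} := by
  have hrows : ∀ i' ∈ Ioc i k, ∑ j' ∈ Ioc i j, density (Kmat A B) i' j' =
      if ∃ j' ∈ Ioc i j, density (Kmat A B) i' j' ≠ 0 then (1 : ℤ) else 0 := fun i' hi' => by
    obtain ⟨hi₁, hi₂⟩ := mem_Ioc.1 hi'
    refine sum_eq_ite_exists_ne_zero (fun a ha b hb => ?_) (fun a ha => ?_) <;>
      obtain ⟨ha₁, ha₂⟩ := mem_Ioc.1 ha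
    · obtain ⟨hb₁, hb₂⟩ := mem_Ioc.1 hb
      exact hRow i' (by omega) (by omega) a b (by omega) (by omega) (by omega) (by omega)
    · exact hVal i' (by omega) (by omega) a (by omega) (by omega)
  have hsum := sum_Ioc_sum_Ioc_density (Kmat A B) hik hij
  rw [sum_congr rfl hrows, sum_boole, kmat_of_le A B le_rfl, kmat_of_le A B hik] at hsum
  have hcard := card_filter_add_card_filter_not (s := Ioc i k)
    (fun i' => ∃ j' ∈ Ioc i j, density (Kmat A B) i' j' ≠ 0)
  rw [Nat.card_Ioc] at hcard
  omega

theorem kmat_cons_sub_kmat {A B : List α} {σ : α} {n : ℕ}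
    (hRow : ∀ i, 1 ≤ i → i ≤ n → ∀ j₁ j₂, 1 ≤ j₁ → j₁ ≤ n → 1 ≤ j₂ → j₂ ≤ n →
      density (Kmat A B) i j₁ ≠ 0 → density (Kmat A B) i j₂ ≠ 0 → j₁ = j₂)
    (hVal : ∀ i, 1 ≤ i → i ≤ n → ∀ j, 1 ≤ j → j ≤ n →
      density (Kmat A B) i j ≠ 0 → density (Kmat A B) i j = 1)
    {i k j : ℕ} (hik : i < k) (hkn : k ≤ n) (hmatch : B[k - 1]? = some σ)
    (hmin : ∀ p, i < p → p < k → B[p - 1]? ≠ some σ) (hij : i ≤ j) (hjn : j ≤ n) :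
    Kmat (σ :: A) B i j - Kmat A B i j = if RowsCovered (Kmat A B) i k j then 1 else 0 := by
  rcases lt_or_ge j k with hjk | hkj
  · have hnot : ¬ RowsCovered (Kmat A B) i k j := fun hcov => by
      obtain ⟨j', hj', hpiv⟩ := hcov k (mem_Ioc.2 ⟨hik, le_rfl⟩)
      have := le_of_density_kmat_ne_zero hpiv
      have := (mem_Ioc.1 hj').2
      omega
    rw [if_neg hnot, kmat_cons_of_forall_ne fun p hp _ => hmin p hp (by omega), sub_self]
  · have hcard := kmat_sub_kmat_eq_card hRow hVal hik.le hkn hij hjn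
    have hcov : RowsCovered (Kmat A B) i k j ↔ Kmat A B i j - Kmat A B k j = 0 := by
      rw [hcard, Nat.cast_eq_zero, card_eq_zero, filter_eq_empty_iff]
      simp only [not_not, RowsCovered]
    rw [kmat_cons_eq_max hik hkj hmatch hmin]
    split_ifs with h
    · rw [max_eq_right] <;> linarith [hcov.1 h]
    · have hpos := mt hcov.2 h
      rw [max_eq_left] <;> omega

theorem rowsCovered_and_not_rowsCovered_pred_iff {D : ℕ → ℕ → ℤ} {n : ℕ}
    (hRow : ∀ i, 1 ≤ i → i ≤ n → ∀ j₁ j₂, 1 ≤ j₁ → j₁ ≤ n → 1 ≤ j₂ → j₂ ≤ n →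
      density D i j₁ ≠ 0 → density D i j₂ ≠ 0 → j₁ = j₂)
    (hle : ∀ i j, density D i j ≠ 0 → i ≤ j) {i k j : ℕ} (hkn : k ≤ n) (hjn : j ≤ n) :
    RowsCovered D i k j ∧ ¬ RowsCovered D i k (j - 1) ↔
      (∀ i', i + 1 ≤ i' → i' ≤ k → ∃ j', 1 ≤ j' ∧ j' ≤ n ∧ density D i' j' ≠ 0) ∧
      (∃ i', i + 1 ≤ i' ∧ i' ≤ k ∧ density D i' j ≠ 0) ∧
      (∀ i' j', i + 1 ≤ i' → i' ≤ k → 1 ≤ j' → j' ≤ n → density D i' j' ≠ 0 → j' ≤ j) := by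
  constructor
  · rintro ⟨hcov, hnot⟩
    have hpiv : ∀ i', i + 1 ≤ i' → i' ≤ k → ∃ j' ∈ Ioc i j, density D i' j' ≠ 0 :=
      fun i' h₁ h₂ => hcov i' (mem_Ioc.2 ⟨by omega, h₂⟩)
    refine ⟨fun i' h₁ h₂ => ?_, ?_, fun i' j' h₁ h₂ h₃ h₄ hne => ?_⟩
    · obtain ⟨j', hj', hne⟩ := hpiv i' h₁ h₂
      obtain ⟨hj₁, hj₂⟩ := mem_Ioc.1 hj'
      exact ⟨j', by omega, by omega, hne⟩
    · obtain ⟨i₀, hi₀, hnone⟩ : ∃ i₀ ∈ Ioc i k, ∀ j' ∈ Ioc i (j - 1), density D i₀ j' = 0 := by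
        unfold RowsCovered at hnot
        push Not at hnot
        exact hnot
      obtain ⟨hi₁, hi₂⟩ := mem_Ioc.1 hi₀
      obtain ⟨j₀, hj₀, hne⟩ := hcov i₀ hi₀
      obtain ⟨hj₁, hj₂⟩ := mem_Ioc.1 hj₀
      have hj₀j : j₀ = j := by
        by_contra hj₀j
        exact hne (hnone j₀ (mem_Ioc.2 ⟨hj₁, by omega⟩))
      exact ⟨i₀, by omega, hi₂, hj₀j ▸ hne⟩
    · obtain ⟨j₀, hj₀, hne₀⟩ := hpiv i' h₁ h₂
      obtain ⟨hj₁, hj₂⟩ := mem_Ioc.1 hj₀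
      have := hRow i' (by omega) (by omega) j' j₀ h₃ h₄ (by omega) (by omega) hne hne₀
      omega
  · rintro ⟨hall, ⟨i₀, hi₁, hi₂, hne₀⟩, hmax⟩
    refine ⟨fun i' hi' => ?_, fun hcov => ?_⟩
    · obtain ⟨h₁, h₂⟩ := mem_Ioc.1 hi'
      obtain ⟨j', hj₁, hj₂, hne⟩ := hall i' h₁ h₂
      have := hle i' j' hne
      exact ⟨j', mem_Ioc.2 ⟨by omega, hmax i' j' h₁ h₂ hj₁ hj₂ hne⟩, hne⟩
    · obtain ⟨j', hj', hne⟩ := hcov i₀ (mem_Ioc.2 ⟨by omega, hi₂⟩)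
      obtain ⟨hj₁, hj₂⟩ := mem_Ioc.1 hj'
      have := hle i₀ j hne₀
      have := hRow i₀ (by omega) (by omega) j' j (by omega) (by omega) (by omega) hjn hne hne₀
      omega

theorem nextmatch_eq_top_iff {σ : α} {B : List α} {i : ℕ} :
    nextmatch i σ B = ⊤ ↔ ∀ p, i < p → p ≤ B.length → B[p - 1]? ≠ some σ := by
  simp only [nextmatch, sInf_eq_top, Set.mem_ofPred_eq, forall_exists_index, and_imp]
  constructor
  · exact fun h p hp hpB hσ => ENat.natCast_ne_top p (h _ p rfl hp hpB hσ)
  · exact fun h _ p _ hp hpB hσ => absurd hσ (h p hp hpB)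

theorem nextmatch_eq_coe {σ : α} {B : List α} {i k : ℕ} (h : nextmatch i σ B = k) :
    i < k ∧ k ≤ B.length ∧ B[k - 1]? = some σ ∧ ∀ p, i < p → p < k → B[p - 1]? ≠ some σ := by
  rw [nextmatch] at h
  have hne : {k : ℕ∞ | ∃ k' : ℕ, k = (k' : ℕ∞) ∧ i < k' ∧ k' ≤ B.length ∧
      B[k' - 1]? = some σ}.Nonempty :=
    Set.nonempty_iff_ne_empty.2 fun he => ENat.natCast_ne_top k (h ▸ he ▸ sInf_empty)
  obtain ⟨k', hk', hik, hkB, hσ⟩ := csInf_mem hne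
  obtain rfl := ENat.natCast_inj.1 (h ▸ hk')
  refine ⟨hik, hkB, hσ, fun p hp hpk hσp => ?_⟩
  have hkp : (k : ℕ∞) ≤ p := h ▸ sInf_le ⟨p, rfl, hp, by omega, hσp⟩
  exact absurd (ENat.natCast_le_natCast.1 hkp) (by omega)

theorem stmt_9_general {α : Type*} (A B : List α) (n : ℕ)
    (hB : B.length = n) (σ : α)
    (hRow : ∀ i, 1 ≤ i → i ≤ n → ∀ j₁ j₂, 1 ≤ j₁ → j₁ ≤ n → 1 ≤ j₂ → j₂ ≤ n →
      density (Kmat A B) i j₁ ≠ 0 → density (Kmat A B) i j₂ ≠ 0 → j₁ = j₂)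
    (hVal : ∀ i, 1 ≤ i → i ≤ n → ∀ j, 1 ≤ j → j ≤ n →
      density (Kmat A B) i j ≠ 0 → density (Kmat A B) i j = 1) :
    ∀ i j : ℕ, i < j → j ≤ n →
      ((Kmat (σ :: A) B i j - Kmat A B i j) ≠
          (Kmat (σ :: A) B i (j - 1) - Kmat A B i (j - 1)) ↔
        ∃ k : ℕ, nextmatch i σ B = (k : ℕ∞) ∧
          (∀ i', i + 1 ≤ i' → i' ≤ k →
            ∃ j', 1 ≤ j' ∧ j' ≤ n ∧ density (Kmat A B) i' j' ≠ 0) ∧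
          (∃ i', i + 1 ≤ i' ∧ i' ≤ k ∧ density (Kmat A B) i' j ≠ 0) ∧
          (∀ i' j', i + 1 ≤ i' → i' ≤ k → 1 ≤ j' → j' ≤ n →
            density (Kmat A B) i' j' ≠ 0 → j' ≤ j)) := by
  subst hB
  intro i j hij hjn
  cases hk : nextmatch i σ B using ENat.recTopCoe with
  | top =>
    have hnone := nextmatch_eq_top_iff.1 hk
    rw [kmat_cons_of_forall_ne (j := j) fun p hp _ => hnone p hp (by omega),
      kmat_cons_of_forall_ne (j := j - 1) fun p hp _ => hnone p hp (by omega)]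
    simp
  | coe k =>
    obtain ⟨hik, hkB, hmatch, hmin⟩ := nextmatch_eq_coe hk
    rw [kmat_cons_sub_kmat hRow hVal hik hkB hmatch hmin hij.le hjn,
      kmat_cons_sub_kmat hRow hVal hik hkB hmatch hmin (by omega) (by omega)]
    simp only [Nat.cast_inj, exists_eq_left']
    rw [← rowsCovered_and_not_rowsCovered_pred_iff hRow
      (fun _ _ => le_of_density_kmat_ne_zero) hkB hjn]
    have hmono : RowsCovered (Kmat A B) i k (j - 1) → RowsCovered (Kmat A B) i k j :=
      fun h => h.mono (Nat.sub_le j 1)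
    split_ifs <;> simp_all

/-- (i,j) is a step index of Diff iff k = nextmatch(i,σ,B) < ∞, every
row i+1,…,k of K□ contains a pivotal point, and j is the maximum column index
among all pivotal points of K□ in rows i+1,…,k. -/
theorem stmt_9 {α : Type*} (A B : List α) (m n : ℕ)
    (hA : A.length = m) (hB : B.length = n) (σ : α)
    (hRow : ∀ i, 1 ≤ i → i ≤ n → ∀ j₁ j₂, 1 ≤ j₁ → j₁ ≤ n → 1 ≤ j₂ → j₂ ≤ n →
      density (Kmat A B) i j₁ ≠ 0 → density (Kmat A B) i j₂ ≠ 0 → j₁ = j₂)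
    (hVal : ∀ i, 1 ≤ i → i ≤ n → ∀ j, 1 ≤ j → j ≤ n →
      density (Kmat A B) i j ≠ 0 → density (Kmat A B) i j = 1) :
    ∀ i j : ℕ, i < j → j ≤ n →
      ((Kmat (σ :: A) B i j - Kmat A B i j) ≠
          (Kmat (σ :: A) B i (j - 1) - Kmat A B i (j - 1)) ↔
        ∃ k : ℕ, nextmatch i σ B = (k : ℕ∞) ∧
          (∀ i', i + 1 ≤ i' → i' ≤ k →
            ∃ j', 1 ≤ j' ∧ j' ≤ n ∧ density (Kmat A B) i' j' ≠ 0) ∧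
          (∃ i', i + 1 ≤ i' ∧ i' ≤ k ∧ density (Kmat A B) i' j ≠ 0) ∧
          (∀ i' j', i + 1 ≤ i' → i' ≤ k → 1 ≤ j' → j' ≤ n →
            density (Kmat A B) i' j' ≠ 0 → j' ≤ j)) :=
  stmt_9_general A B n hB σ hRow hVal
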